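/- arXiv:math/0503074 — 5 statements merged into one kernel-verified Lean document; each statement's English description precedes it below -/
import Mathlib

section
/- For 0 < q < 1, the monic polynomials C_n(x) = (n! q^n/(q-1)^n) · M_n(x; 1, q), where M_n is the Meixner polynomial M_n(x;c,q) = ₂F₁(-n,-x; c; 1 - 1/q), satisfy the orthogonality relation ∑_{x=0}^∞ q^x C_m(x) C_n(x) = h_n δ_{m,n} with h_n = (n!)² q^n/(1-q)^{2n+1}. -/
open scoped BigOperators

noncomputable def poch (a : ℝ) (k : ℕ) : ℝ := ∏ i ∈ Finset.range k, (a + i)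

noncomputable def meixner (n : ℕ) (x : ℝ) (c q : ℝ) : ℝ :=
  ∑ k ∈ Finset.range (n + 1),
    poch (-(n : ℝ)) k * poch (-x) k / (poch c k * (k.factorial : ℝ)) * (1 - 1 / q) ^ k

noncomputable def meixnerC (q : ℝ) (n : ℕ) (x : ℝ) : ℝ :=
  ((n.factorial : ℝ) * q ^ n / (q - 1) ^ n) * meixner n x 1 q

namespace MeixAux

lemma poch_one (k : ℕ) : poch 1 k = (k.factorial : ℝ) := by
  induction k with
  | zero => simp [poch]
  | succ k ih =>
    rw [poch, Finset.prod_range_succ, ← poch, ih, Nat.factorial_succ]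
    push_cast; ring

lemma choose_cast_succ_right (n k : ℕ) :
    ((n.choose (k+1) : ℝ)) * (k+1) = (n.choose k : ℝ) * ((n : ℝ) - k) := by
  rcases le_or_gt k n with h | h
  · have := Nat.choose_succ_right_eq n k
    have : ((n.choose (k+1) * (k+1) : ℕ) : ℝ) = ((n.choose k * (n - k) : ℕ) : ℝ) := by
      exact_mod_cast congrArg (Nat.cast (R := ℝ)) this
    push_cast [Nat.cast_sub h] at this
    linarith [this]
  · rw [Nat.choose_eq_zero_of_lt h, Nat.choose_eq_zero_of_lt (by omega)]
    simp

lemma poch_neg_nat (n k : ℕ) :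
    poch (-(n : ℝ)) k = (-1) ^ k * (k.factorial : ℝ) * (n.choose k : ℝ) := by
  induction k with
  | zero => simp [poch]
  | succ k ih =>
    rw [poch, Finset.prod_range_succ, ← poch, ih, Nat.factorial_succ]
    have h := choose_cast_succ_right n k
    push_cast
    linear_combination (-1:ℝ)^k * (k.factorial:ℝ) * h

/-- `x * C(x,k) = (k+1) C(x,k+1) + k C(x,k)` over ℝ. -/
lemma xmul (x k : ℕ) :
    (x : ℝ) * (x.choose k : ℝ) = ((k:ℝ)+1) * (x.choose (k+1) : ℝ) + (k:ℝ) * (x.choose k : ℝ) := by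
  have h := choose_cast_succ_right x k
  linarith [h]

end MeixAux

namespace MeixAux

noncomputable def Bfun (q : ℝ) (n x : ℕ) : ℝ :=
  ∑ k ∈ Finset.range (n + 1), (n.choose k : ℝ) * (x.choose k : ℝ) * (1 - 1 / q) ^ k

noncomputable def bcoef (q : ℝ) (n : ℕ) : ℝ := ((1 + q) * n + q) / (1 - q)
noncomputable def lcoef (q : ℝ) (n : ℕ) : ℝ := (n : ℝ) ^ 2 * q / (1 - q) ^ 2
noncomputable def hnorm (q : ℝ) (n : ℕ) : ℝ :=
  ((n.factorial : ℝ)) ^ 2 * q ^ n / (1 - q) ^ (2 * n + 1)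

lemma meixner_eq_Bfun (q : ℝ) (n x : ℕ) : meixner n (x : ℝ) 1 q = Bfun q n x := by
  unfold meixner Bfun
  refine Finset.sum_congr rfl fun k _ => ?_
  rw [poch_one, poch_neg_nat, poch_neg_nat]
  have hf : (k.factorial : ℝ) ≠ 0 := by exact_mod_cast k.factorial_ne_zero
  have hsq : ((-1:ℝ))^k * ((-1:ℝ))^k = 1 := by
    rw [← pow_add, ← two_mul, pow_mul]; norm_num
  field_simp
  linear_combination ((n.choose k : ℝ) * (x.choose k : ℝ) * (1 - 1/q)^k) * hsq

lemma meixnerC_eq_Bfun (q : ℝ) (n x : ℕ) :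
    meixnerC q n (x : ℝ) = ((n.factorial : ℝ) * q ^ n / (q - 1) ^ n) * Bfun q n x := by
  rw [meixnerC, meixner_eq_Bfun]

lemma Bfun_eq_sum (q : ℝ) (n x N : ℕ) (hN : n + 1 ≤ N) :
    Bfun q n x = ∑ k ∈ Finset.range N, (n.choose k : ℝ) * (x.choose k : ℝ) * (1 - 1 / q) ^ k := by
  unfold Bfun
  apply Finset.sum_subset (Finset.range_subset_range.2 hN)
  intro k _ hk
  simp only [Finset.mem_range, not_lt] at hk
  rw [Nat.choose_eq_zero_of_lt (by omega)]
  simp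

/-- The key coefficient identity. -/
lemma dagger (q : ℝ) (hq0 : q ≠ 0) (hq1 : (1:ℝ) - q ≠ 0) (n k : ℕ) :
    ((n:ℝ) + 1) * ((n+1).choose k : ℝ) =
      (k : ℝ) * (n.choose (k-1) : ℝ)
      + ((1 - 1/q) * k - (1 - 1/q) * bcoef q n) * (n.choose k : ℝ)
      - ((n:ℝ)/q) * ((n-1).choose k : ℝ) := by
  have h0 : (1 - 1/q) * ((k:ℝ) - bcoef q n) = ((k:ℝ) + n + 1) + ((n:ℝ) - k)/q := by
    unfold bcoef; field_simp; ring
  have hI2 : ((n:ℝ) - k) * (n.choose k : ℝ) = (n : ℝ) * ((n-1).choose k : ℝ) := by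
    rcases n with _ | i
    · rcases k with _ | j <;> simp
    · simp only [Nat.succ_sub_one]
      rcases le_or_gt k (i+1) with h | h
      · have hnat : (i+1).choose k * (i+1 - k) = (i+1) * i.choose k := by
          rw [← Nat.choose_succ_right_eq, Nat.add_one_mul_choose_eq]
        have hcast := congrArg (Nat.cast (R := ℝ)) hnat
        push_cast [Nat.cast_sub h] at hcast
        push_cast
        linarith [hcast]
      · rw [Nat.choose_eq_zero_of_lt h, Nat.choose_eq_zero_of_lt (by omega)]
        simp
  rcases k with _ | j
  · simp only [Nat.choose_zero_right, Nat.cast_zero, Nat.cast_one]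
    push_cast at h0 ⊢
    linear_combination -h0
  · have hI1 : ((n:ℝ) + 1) * ((n+1).choose (j+1) : ℝ)
        = ((j:ℝ)+1) * (n.choose j : ℝ) + (((j:ℝ)+1) + n + 1) * (n.choose (j+1) : ℝ) := by
      have h1 := choose_cast_succ_right n j
      have h2 : ((n+1).choose (j+1) : ℝ) = (n.choose j : ℝ) + (n.choose (j+1) : ℝ) := by
        rw [Nat.choose_succ_succ]; push_cast; ring
      rw [h2]
      linear_combination -h1
    simp only [Nat.succ_sub_one]
    push_cast at h0 hI2 hI1 ⊢
    linear_combination hI1 - (n.choose (j+1) : ℝ) * h0 - (1/q) * hI2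

lemma recB (q : ℝ) (hq0 : q ≠ 0) (hq1 : (1:ℝ) - q ≠ 0) (n x : ℕ) :
    ((n:ℝ) + 1) * Bfun q (n+1) x
      = (1 - 1/q) * ((x:ℝ) - bcoef q n) * Bfun q n x - ((n:ℝ)/q) * Bfun q (n-1) x := by
  set N := n + 3 with hNdef
  set t : ℝ := 1 - 1/q with ht
  set F : ℕ → ℝ := fun k => (k:ℝ) * (n.choose (k-1) : ℝ) * (x.choose k : ℝ) * t ^ k with hF
  have hsplit : t * ((x:ℝ) - bcoef q n) * Bfun q n x
      = (∑ k ∈ Finset.range N, F k)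
        + ∑ k ∈ Finset.range N,
            ((t * k - t * bcoef q n) * (n.choose k : ℝ)) * (x.choose k : ℝ) * t ^ k := by
    rw [Bfun_eq_sum q n x N (by omega), Finset.mul_sum]
    have e1 : ∀ k ∈ Finset.range N,
        t * ((x:ℝ) - bcoef q n) * ((n.choose k : ℝ) * (x.choose k : ℝ) * t ^ k)
          = (t * (n.choose k : ℝ) * t^k) * (((k:ℝ)+1) * (x.choose (k+1) : ℝ))
            + ((t * k - t * bcoef q n) * (n.choose k : ℝ)) * (x.choose k : ℝ) * t ^ k := by
      intro k _
      have hx := xmul x k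
      linear_combination (t * (n.choose k:ℝ) * t^k) * hx
    rw [Finset.sum_congr rfl e1, Finset.sum_add_distrib]
    congr 1
    have e2 : ∀ k ∈ Finset.range N,
        (t * (n.choose k:ℝ) * t^k) * (((k:ℝ)+1) * (x.choose (k+1):ℝ)) = F (k+1) := by
      intro k _
      simp only [hF, Nat.add_sub_cancel]
      push_cast
      ring
    rw [Finset.sum_congr rfl e2]
    have e3 : ∑ k ∈ Finset.range (N+1), F k = (∑ k ∈ Finset.range N, F (k+1)) + F 0 :=
      Finset.sum_range_succ' F N
    have e4 : ∑ k ∈ Finset.range (N+1), F k = (∑ k ∈ Finset.range N, F k) + F N :=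
      Finset.sum_range_succ F N
    have hF0 : F 0 = 0 := by simp [hF]
    have hFN : F N = 0 := by
      simp only [hF, hNdef]
      rw [show n + 3 - 1 = n + 2 by omega, Nat.choose_eq_zero_of_lt (by omega)]
      simp
    have e5 := e3.symm.trans e4
    rw [hF0, hFN] at e5
    linarith [e5]
  rw [Bfun_eq_sum q (n+1) x N (by omega), Bfun_eq_sum q (n-1) x N (by omega), hsplit,
    Finset.mul_sum, Finset.mul_sum, ← Finset.sum_add_distrib, ← Finset.sum_sub_distrib]
  refine Finset.sum_congr rfl fun k _ => ?_
  have hd := dagger q hq0 hq1 n k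
  linear_combination ((x.choose k : ℝ) * t^k) * hd

lemma recur (q : ℝ) (hq0 : 0 < q) (hq1 : q < 1) (n x : ℕ) :
    meixnerC q (n+1) (x:ℝ)
      = ((x:ℝ) - bcoef q n) * meixnerC q n (x:ℝ) - lcoef q n * meixnerC q (n-1) (x:ℝ) := by
  have hq : q ≠ 0 := ne_of_gt hq0
  have h1q : (1:ℝ) - q ≠ 0 := by intro h; nlinarith
  have hq1' : q - 1 ≠ 0 := by intro h; nlinarith
  have hrecB := recB q hq h1q n x
  have hn1 : ((n:ℝ)+1) ≠ 0 := by positivity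
  have S1 : (((n+1).factorial:ℝ) * q^(n+1)/(q-1)^(n+1)) * (1 - 1/q)
      = ((n:ℝ)+1) * ((n.factorial:ℝ) * q^n/(q-1)^n) := by
    rw [Nat.factorial_succ, pow_succ, pow_succ]
    push_cast
    field_simp
  have S2 : (((n+1).factorial:ℝ) * q^(n+1)/(q-1)^(n+1)) * ((n:ℝ)/q)
      = ((n:ℝ)+1) * (lcoef q n * (((n-1).factorial:ℝ) * q^(n-1)/(q-1)^(n-1))) := by
    rcases n with _ | i
    · simp [lcoef]
    · simp only [Nat.succ_sub_one, lcoef]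
      rw [Nat.factorial_succ (i+1), Nat.factorial_succ i, pow_succ q (i+1), pow_succ q i,
        pow_succ (q-1) (i+1), pow_succ (q-1) i]
      push_cast
      have h1 : ((q:ℝ)-1)^i ≠ 0 := pow_ne_zero _ hq1'
      have h2 : (q:ℝ)^i ≠ 0 := pow_ne_zero _ hq
      field_simp
      ring
  rw [meixnerC_eq_Bfun, meixnerC_eq_Bfun, meixnerC_eq_Bfun]
  apply mul_left_cancel₀ hn1
  calc ((n:ℝ)+1) * ((((n+1).factorial:ℝ) * q^(n+1)/(q-1)^(n+1)) * Bfun q (n+1) x)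
      = (((n+1).factorial:ℝ) * q^(n+1)/(q-1)^(n+1)) * (((n:ℝ)+1) * Bfun q (n+1) x) := by ring
    _ = (((n+1).factorial:ℝ) * q^(n+1)/(q-1)^(n+1))
          * ((1 - 1/q) * ((x:ℝ) - bcoef q n) * Bfun q n x - ((n:ℝ)/q) * Bfun q (n-1) x) := by
        rw [hrecB]
    _ = ((n:ℝ)+1) * (((x:ℝ) - bcoef q n) * ((n.factorial:ℝ) * q^n/(q-1)^n * Bfun q n x)
          - lcoef q n * (((n-1).factorial:ℝ) * q^(n-1)/(q-1)^(n-1) * Bfun q (n-1) x)) := by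
        linear_combination (((x:ℝ) - bcoef q n) * Bfun q n x) * S1 - (Bfun q (n-1) x) * S2

lemma hasSum_choose_geom (q : ℝ) (hq0 : 0 ≤ q) (hq1 : q < 1) (k : ℕ) :
    HasSum (fun x : ℕ => (x.choose k : ℝ) * q ^ x) (q ^ k / (1 - q) ^ (k + 1)) := by
  have h1q : (1 : ℝ) - q ≠ 0 := by intro h; nlinarith
  induction k with
  | zero =>
    have := hasSum_geometric_of_lt_one hq0 hq1
    have heq : q ^ 0 / (1 - q) ^ (0 + 1) = (1 - q)⁻¹ := by
      rw [pow_zero, pow_one]; exact one_div _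
    rw [heq]
    simpa using this
  | succ k ih =>
    have hq' : ‖q‖ < 1 := by rw [Real.norm_eq_abs, abs_of_nonneg hq0]; exact hq1
    have hsum : Summable (fun x : ℕ => (x.choose (k + 1) : ℝ) * q ^ x) := by
      apply Summable.of_norm_bounded (g := fun x : ℕ => (x : ℝ) ^ (k + 1) * q ^ x)
        (summable_pow_mul_geometric_of_norm_lt_one (k + 1) hq')
      intro x
      rw [Real.norm_eq_abs, abs_of_nonneg (by positivity)]
      have hle : (x.choose (k + 1) : ℝ) ≤ (x : ℝ) ^ (k + 1) := by
        exact_mod_cast Nat.choose_le_pow x (k + 1)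
      have hqx : (0 : ℝ) ≤ q ^ x := by positivity
      exact mul_le_mul_of_nonneg_right hle hqx
    obtain ⟨T, hT⟩ := hsum
    have hshift : HasSum (fun x : ℕ => ((x + 1).choose (k + 1) : ℝ) * q ^ (x + 1)) T := by
      refine (hasSum_nat_add_iff (f := fun x : ℕ => (x.choose (k + 1) : ℝ) * q ^ x) 1).mpr ?_
      simpa using hT
    have hcomb : HasSum
        (fun x : ℕ => q * ((x.choose k : ℝ) * q ^ x) + q * ((x.choose (k + 1) : ℝ) * q ^ x))
        (q * (q ^ k / (1 - q) ^ (k + 1)) + q * T) := (ih.mul_left q).add (hT.mul_left q)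
    have hfun : (fun x : ℕ => ((x + 1).choose (k + 1) : ℝ) * q ^ (x + 1))
        = fun x : ℕ => q * ((x.choose k : ℝ) * q ^ x) + q * ((x.choose (k + 1) : ℝ) * q ^ x) := by
      funext x
      rw [Nat.choose_succ_succ, pow_succ]
      push_cast
      ring
    rw [hfun] at hshift
    have heq : T = q * (q ^ k / (1 - q) ^ (k + 1)) + q * T := hshift.unique hcomb
    have hAux : q * (q ^ k / (1 - q) ^ (k + 1))
        = (1 - q) * (q ^ (k + 1) / (1 - q) ^ (k + 1 + 1)) := by
      rw [pow_succ q, pow_succ (1 - q) (k + 1)]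
      field_simp
    have hval : T = q ^ (k + 1) / (1 - q) ^ (k + 1 + 1) := by
      apply mul_left_cancel₀ h1q
      linear_combination heq + hAux
    rw [← hval]
    exact hT

lemma cast_alt_sum (m : ℕ) :
    (∑ k ∈ Finset.range (m + 1), ((-1 : ℝ) ^ k * (m.choose k : ℝ))) =
      if m = 0 then 1 else 0 := by
  have h := Int.alternating_sum_range_choose (n := m)
  have h2 := congrArg (fun z : ℤ => (z : ℝ)) h
  push_cast at h2
  exact h2


lemma meixnerC_zero (q : ℝ) (x : ℝ) : meixnerC q 0 x = 1 := by
  simp [meixnerC, meixner, poch]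

lemma hnorm_succ (q : ℝ) (hq0 : 0 < q) (hq1 : q < 1) (k : ℕ) :
    hnorm q (k + 1) = lcoef q (k + 1) * hnorm q k := by
  have h1q : (1 : ℝ) - q ≠ 0 := by intro h; nlinarith
  unfold hnorm lcoef
  rw [Nat.factorial_succ, pow_succ q k, show 2 * (k + 1) + 1 = (2 * k + 1) + 2 by ring,
    pow_add (1 - q) (2 * k + 1) 2]
  have h2 : ((1 : ℝ) - q) ^ (2 * k + 1) ≠ 0 := pow_ne_zero _ h1q
  push_cast
  field_simp

lemma row0 (q : ℝ) (hq0 : 0 < q) (hq1 : q < 1) (m : ℕ) :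
    HasSum (fun x : ℕ => q ^ x * meixnerC q m (x : ℝ))
      (if m = 0 then 1 / (1 - q) else 0) := by
  have h1q : (1 : ℝ) - q ≠ 0 := by intro h; nlinarith
  set c : ℝ := (m.factorial : ℝ) * q ^ m / (q - 1) ^ m with hc
  have hs : HasSum
      (fun x : ℕ => ∑ k ∈ Finset.range (m + 1),
        (c * (m.choose k : ℝ) * (1 - 1/q) ^ k) * ((x.choose k : ℝ) * q ^ x))
      (∑ k ∈ Finset.range (m + 1),
        (c * (m.choose k : ℝ) * (1 - 1/q) ^ k) * (q ^ k / (1 - q) ^ (k + 1))) :=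
    hasSum_sum fun k _ => (hasSum_choose_geom q hq0.le hq1 k).mul_left _
  have hfun : (fun x : ℕ => q ^ x * meixnerC q m (x : ℝ))
      = fun x : ℕ => ∑ k ∈ Finset.range (m + 1),
          (c * (m.choose k : ℝ) * (1 - 1/q) ^ k) * ((x.choose k : ℝ) * q ^ x) := by
    funext x
    rw [meixnerC_eq_Bfun, Bfun, Finset.mul_sum, Finset.mul_sum]
    refine Finset.sum_congr rfl fun k _ => ?_
    rw [hc]
    ring
  rw [hfun]
  convert hs using 1
  have hterm : ∀ k : ℕ, (1 - 1/q) ^ k * (q ^ k / (1 - q) ^ (k + 1)) = (-1 : ℝ) ^ k / (1 - q) := by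
    intro k
    have e1 : ((1 : ℝ) - 1/q) ^ k * q ^ k = (q - 1) ^ k := by
      rw [← mul_pow]
      congr 1
      field_simp
    have e2 : ((q : ℝ) - 1) ^ k = (-1) ^ k * (1 - q) ^ k := by
      rw [show (q : ℝ) - 1 = (-1) * (1 - q) by ring, mul_pow]
    have h2 : ((1 : ℝ) - q) ^ k ≠ 0 := pow_ne_zero _ h1q
    calc (1 - 1/q) ^ k * (q ^ k / (1 - q) ^ (k + 1))
        = (1 - 1/q) ^ k * q ^ k / ((1 - q) ^ k * (1 - q)) := by rw [pow_succ]; ring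
      _ = (-1) ^ k * (1 - q) ^ k / ((1 - q) ^ k * (1 - q)) := by rw [e1, e2]
      _ = (-1) ^ k / (1 - q) := by
          field_simp
  have hval : ∑ k ∈ Finset.range (m + 1),
      (c * (m.choose k : ℝ) * (1 - 1/q) ^ k) * (q ^ k / (1 - q) ^ (k + 1))
      = (c / (1 - q)) * ∑ k ∈ Finset.range (m + 1), ((-1 : ℝ) ^ k * (m.choose k : ℝ)) := by
    rw [Finset.mul_sum]
    refine Finset.sum_congr rfl fun k _ => ?_
    have := hterm k
    linear_combination (c * (m.choose k : ℝ)) * this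
  rw [hval, cast_alt_sum]
  rcases Nat.eq_zero_or_pos m with hm | hm
  · subst hm
    simp [hc]
  · rw [if_neg (by omega), if_neg (by omega), mul_zero]

lemma valstep (q : ℝ) (hq0 : 0 < q) (hq1 : q < 1) (n m : ℕ) :
    (if m = n + 1 then hnorm q (n + 1) else 0)
      = ((if m + 1 = n then hnorm q n else 0)
          + (bcoef q m - bcoef q n) * (if m = n then hnorm q n else 0)
          + lcoef q m * (if m - 1 = n then hnorm q n else 0))
        - lcoef q n * (if m = n - 1 then hnorm q (n - 1) else 0) := by
  by_cases h1 : m = n + 1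
  · subst h1
    rw [if_pos rfl, if_neg (by omega), if_neg (by omega), if_pos (by omega), if_neg (by omega)]
    rw [hnorm_succ q hq0 hq1 n]
    ring
  · by_cases h2 : m = n
    · subst h2
      rcases Nat.eq_zero_or_pos m with hm | hm
      · subst hm
        simp [lcoef]
      · rw [if_neg h1, if_neg (by omega), if_pos rfl, if_neg (by omega), if_neg (by omega)]
        ring
    · by_cases h3 : m + 1 = n
      · subst h3
        rw [if_neg h1, if_pos rfl, if_neg h2, if_neg (by omega), if_pos (by omega)]
        rw [show m + 1 - 1 = m from by omega]
        rw [hnorm_succ q hq0 hq1 m]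
        ring
      · rw [if_neg h1, if_neg h3, if_neg h2, if_neg (by omega), if_neg (by omega)]
        ring

lemma key (q : ℝ) (hq0 : 0 < q) (hq1 : q < 1) :
    ∀ n m : ℕ, HasSum (fun x : ℕ => q ^ x * meixnerC q m (x : ℝ) * meixnerC q n (x : ℝ))
      (if m = n then hnorm q n else 0) := by
  intro n
  induction n using Nat.strong_induction_on with
  | _ n ih =>
    rcases n with _ | n
    · intro m
      have h := row0 q hq0 hq1 m
      have hfun : (fun x : ℕ => q ^ x * meixnerC q m (x : ℝ) * meixnerC q 0 (x : ℝ))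
          = fun x : ℕ => q ^ x * meixnerC q m (x : ℝ) := by
        funext x
        rw [meixnerC_zero]
        ring
      rw [hfun]
      convert h using 1
      by_cases hm : m = 0
      · subst hm
        simp [hnorm]
      · rw [if_neg hm, if_neg hm]
    · intro m
      have h1 := ih n (by omega) (m + 1)
      have h2 := ih n (by omega) m
      have h3 := ih n (by omega) (m - 1)
      have h4 := ih (n - 1) (by omega) m
      have hcomb := ((h1.add (h2.mul_left (bcoef q m - bcoef q n))).add
        (h3.mul_left (lcoef q m))).sub (h4.mul_left (lcoef q n))
      convert hcomb using 1
      · rfl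
      · funext x
        have hn := recur q hq0 hq1 n x
        have hm := recur q hq0 hq1 m x
        linear_combination (q ^ x * meixnerC q m (x : ℝ)) * hn
          - (q ^ x * meixnerC q n (x : ℝ)) * hm
      · exact valstep q hq0 hq1 n m

end MeixAux

/-- Orthogonality of the monic Meixner polynomials:
`∑_{x≥0} qˣ C_m(x) C_n(x) = h_n δ_{mn}` with `h_n = (n!)² qⁿ/(1-q)^{2n+1}`. -/
theorem meixnerC_orthogonality (q : ℝ) (hq0 : 0 < q) (hq1 : q < 1) (m n : ℕ) :
    HasSum (fun x : ℕ => q ^ x * meixnerC q m x * meixnerC q n x)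
      (if m = n then ((n.factorial : ℝ)) ^ 2 * q ^ n / (1 - q) ^ (2 * n + 1) else 0) := by
  exact MeixAux.key q hq0 hq1 n m
end

section
/- The monic Meixner-type polynomials C_n(x) = (n! q^n/(q-1)^n) M_n(x;1,q) satisfy the shifted recurrence x·C_n(x-1) = C_{n+1}(x) - (q/(q-1))·(2n+1)·C_n(x) + (n² q²/(q-1)²)·C_{n-1}(x). -/
open scoped BigOperators

noncomputable def fall (x : ℝ) (k : ℕ) : ℝ := ∏ i ∈ Finset.range k, (x - i)

noncomputable def Bc (q : ℝ) (n k : ℕ) : ℝ :=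
  ((n.factorial : ℝ))^2 / (((n-k).factorial : ℝ) * ((k.factorial : ℝ))^2) * (q/(q-1))^(n-k)

lemma poch_succ (a : ℝ) (k : ℕ) : poch a (k+1) = poch a k * (a + k) :=
  Finset.prod_range_succ _ _

lemma poch_one (k : ℕ) : poch 1 k = (k.factorial : ℝ) := by
  induction k with
  | zero => simp [poch]
  | succ k ih => rw [poch_succ, ih, Nat.factorial_succ]; push_cast; ring

lemma poch_neg (x : ℝ) (k : ℕ) : poch (-x) k = (-1)^k * fall x k := by
  induction k with
  | zero => simp [poch, fall]
  | succ k ih =>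
    rw [poch_succ, ih, show fall x (k+1) = fall x k * (x - k) from Finset.prod_range_succ _ _]
    ring

lemma prod_cast_sub (n k : ℕ) (h : k ≤ n) :
    ∏ i ∈ Finset.range k, ((n : ℝ) - i) = (n.factorial : ℝ) / ((n - k).factorial : ℝ) := by
  induction k with
  | zero =>
    simp [div_self (Nat.cast_ne_zero.mpr (Nat.factorial_ne_zero n) : ((n.factorial : ℝ)) ≠ 0)]
  | succ k ih =>
    have hk : k ≤ n := Nat.le_of_succ_le h
    rw [Finset.prod_range_succ, ih hk]
    have h1 : n - k = (n - (k+1)) + 1 := by omega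
    rw [h1, Nat.factorial_succ, Nat.cast_mul]
    have h2 : ((n - (k+1) + 1 : ℕ) : ℝ) = (n:ℝ) - k := by
      rw [Nat.cast_add, Nat.cast_sub h]; push_cast; ring
    rw [h2]
    have hf : ((n - (k+1)).factorial : ℝ) ≠ 0 := Nat.cast_ne_zero.mpr (Nat.factorial_ne_zero _)
    have hnk : (n:ℝ) - k ≠ 0 := by
      have : (k:ℝ) + 1 ≤ (n:ℝ) := by exact_mod_cast h
      linarith
    field_simp

lemma fall_succ (x : ℝ) (k : ℕ) : fall x (k+1) = x * fall (x-1) k := by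
  unfold fall
  rw [Finset.prod_range_succ']
  have h : ∀ i ∈ Finset.range k, x - ((i+1 : ℕ) : ℝ) = (x - 1) - (i:ℝ) := by
    intro i _; push_cast; ring
  rw [Finset.prod_congr rfl h]
  simp only [Nat.cast_zero]
  ring

lemma sum_if_le (f : ℕ → ℝ) (N M : ℕ) (h : N + 1 ≤ M) :
    ∑ j ∈ Finset.range M, (if j ≤ N then f j else 0) = ∑ j ∈ Finset.range (N + 1), f j := by
  induction M with
  | zero => omega
  | succ M ih =>
    rcases Nat.lt_or_ge N M with hM | hM
    · rw [Finset.sum_range_succ, ih (by omega), if_neg (by omega), add_zero]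
    · have hNM : N = M := by omega
      subst hNM
      exact Finset.sum_congr rfl fun j hj =>
        if_pos (Nat.lt_succ_iff.mp (Finset.mem_range.mp hj))

lemma meixnerC_eq (q : ℝ) (hq0 : 0 < q) (hq1 : q < 1) (n : ℕ) (x : ℝ) :
    meixnerC q n x = ∑ k ∈ Finset.range (n+1), Bc q n k * fall x k := by
  unfold meixnerC meixner
  rw [Finset.mul_sum]
  refine Finset.sum_congr rfl fun k hk => ?_
  have hk' : k ≤ n := Nat.lt_succ_iff.mp (Finset.mem_range.mp hk)
  have hqne : q ≠ 0 := ne_of_gt hq0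
  have hq1ne : q - 1 ≠ 0 := by linarith
  have hs : q / (q-1) ≠ 0 := div_ne_zero hqne hq1ne
  rw [poch_one, poch_neg, poch_neg,
    show fall (n:ℝ) k = ∏ i ∈ Finset.range k, ((n:ℝ) - i) from rfl, prod_cast_sub n k hk']
  have h1q : 1 - 1/q = (q-1)/q := by field_simp
  rw [h1q]
  unfold Bc
  rw [pow_sub₀ _ hs hk']
  have hfn : ((n.factorial : ℝ)) ≠ 0 := Nat.cast_ne_zero.mpr (Nat.factorial_ne_zero _)
  have hfnk : (((n-k).factorial : ℝ)) ≠ 0 := Nat.cast_ne_zero.mpr (Nat.factorial_ne_zero _)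
  have hfk : ((k.factorial : ℝ)) ≠ 0 := Nat.cast_ne_zero.mpr (Nat.factorial_ne_zero _)
  simp only [div_pow] at *
  field_simp
  ring_nf
  rw [mul_comm k 2, pow_mul]
  norm_num


/-- The shifted recurrence for the monic Meixner polynomials:
`x C_n(x-1) = C_{n+1}(x) - (q/(q-1))(2n+1) C_n(x) + (n²q²/(q-1)²) C_{n-1}(x)`. -/
theorem meixnerC_shifted_recurrence (q : ℝ) (hq0 : 0 < q) (hq1 : q < 1) (n : ℕ)
    (hn : 1 ≤ n) (x : ℝ) :
    x * meixnerC q n (x - 1) =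
      meixnerC q (n + 1) x - (q / (q - 1)) * (2 * (n : ℝ) + 1) * meixnerC q n x +
        ((n : ℝ) ^ 2 * q ^ 2 / (q - 1) ^ 2) * meixnerC q (n - 1) x := by
  have hqne : q ≠ 0 := ne_of_gt hq0
  have hq1ne : q - 1 ≠ 0 := by linarith
  obtain ⟨m, rfl⟩ : ∃ m, n = m + 1 := ⟨n - 1, by omega⟩
  simp only [Nat.add_sub_cancel]
  simp only [meixnerC_eq q hq0 hq1]
  rw [show ((m+1 : ℕ) : ℝ)^2 * q^2 / (q-1)^2 = ((m+1:ℕ):ℝ)^2 * (q/(q-1))^2 by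
    rw [div_pow]; ring]
  rw [Finset.mul_sum]
  rw [Finset.sum_congr rfl (fun k _ => by rw [fall_succ]; ring :
    ∀ k ∈ Finset.range (m+1+1), x * (Bc q (m+1) k * fall (x-1) k)
      = Bc q (m+1) k * fall x (k+1))]
  rw [← sum_if_le (fun j => Bc q (m+1) j * fall x j) (m+1) (m+1+1+1) (by omega),
      ← sum_if_le (fun j => Bc q m j * fall x j) m (m+1+1+1) (by omega)]
  rw [Finset.mul_sum, Finset.mul_sum, ← Finset.sum_sub_distrib, ← Finset.sum_add_distrib]
  conv_rhs => rw [show (m+1+1+1) = (m+1+1)+1 from rfl, Finset.sum_range_succ']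
  have hG0 : Bc q (m+1+1) 0 * fall x 0 -
      q/(q-1) * (2 * ((m+1:ℕ):ℝ) + 1) * (if 0 ≤ m+1 then Bc q (m+1) 0 * fall x 0 else 0) +
      ((m+1:ℕ):ℝ)^2 * (q/(q-1))^2 * (if 0 ≤ m then Bc q m 0 * fall x 0 else 0) = 0 := by
    rw [if_pos (Nat.zero_le _), if_pos (Nat.zero_le _)]
    have hfall0 : fall x 0 = 1 := Finset.prod_range_zero _
    have hf1 : (((m+1).factorial : ℕ) : ℝ) = ((m:ℝ)+1) * ((m.factorial : ℕ) : ℝ) := by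
      rw [Nat.factorial_succ]; push_cast; ring
    have hf2 : (((m+1+1).factorial : ℕ) : ℝ) = ((m:ℝ)+2) * (((m:ℝ)+1) * ((m.factorial : ℕ) : ℝ)) := by
      rw [show m+1+1 = (m+1)+1 from rfl, Nat.factorial_succ, Nat.cast_mul, hf1]; push_cast; ring
    have n1 : ((m.factorial : ℕ) : ℝ) ≠ 0 := Nat.cast_ne_zero.mpr (Nat.factorial_ne_zero _)
    have n6 : (m:ℝ)+1 ≠ 0 := by positivity
    have n7 : (m:ℝ)+2 ≠ 0 := by positivity
    simp only [Bc, Nat.sub_zero, Nat.factorial_zero, Nat.cast_one, hfall0, hf1, hf2]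
    push_cast
    simp only [div_pow]
    field_simp
    ring
  rw [hG0, add_zero]
  refine Finset.sum_congr rfl fun k hk => ?_
  have hkr : k < m + 2 := by simpa using Finset.mem_range.mp hk
  rcases lt_trichotomy k m with hkm | rfl | hkm
  · obtain ⟨i, rfl⟩ : ∃ i, m = k + 1 + i := ⟨m - (k+1), by omega⟩
    rw [if_pos (by omega : k+1 ≤ k+1+i+1), if_pos (by omega : k+1 ≤ k+1+i)]
    have hf1 : (((k+1+i+1).factorial : ℕ) : ℝ)
        = ((k:ℝ)+(i:ℝ)+2) * (((k+1+i).factorial : ℕ) : ℝ) := by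
      rw [show k+1+i+1 = (k+1+i)+1 from rfl, Nat.factorial_succ]; push_cast; ring
    have hf2 : (((k+1+i+1+1).factorial : ℕ) : ℝ)
        = ((k:ℝ)+(i:ℝ)+3) * (((k:ℝ)+(i:ℝ)+2) * (((k+1+i).factorial : ℕ) : ℝ)) := by
      rw [show k+1+i+1+1 = (k+1+i+1)+1 from rfl, Nat.factorial_succ, Nat.cast_mul, hf1]
      push_cast; ring
    have hf3 : (((k+1).factorial : ℕ) : ℝ) = ((k:ℝ)+1) * ((k.factorial : ℕ) : ℝ) := by
      rw [Nat.factorial_succ]; push_cast; ring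
    have hf4 : (((i+2).factorial : ℕ) : ℝ) = ((i:ℝ)+2) * (((i:ℝ)+1) * ((i.factorial : ℕ) : ℝ)) := by
      rw [show i+2 = (i+1)+1 from rfl, Nat.factorial_succ, Nat.cast_mul, Nat.factorial_succ,
        Nat.cast_mul]
      push_cast; ring
    have hf5 : (((i+1).factorial : ℕ) : ℝ) = ((i:ℝ)+1) * ((i.factorial : ℕ) : ℝ) := by
      rw [Nat.factorial_succ]; push_cast; ring
    have n1 : (((k+1+i).factorial : ℕ) : ℝ) ≠ 0 := Nat.cast_ne_zero.mpr (Nat.factorial_ne_zero _)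
    have n2 : ((k.factorial : ℕ) : ℝ) ≠ 0 := Nat.cast_ne_zero.mpr (Nat.factorial_ne_zero _)
    have n3 : ((i.factorial : ℕ) : ℝ) ≠ 0 := Nat.cast_ne_zero.mpr (Nat.factorial_ne_zero _)
    have n4 : (i:ℝ)+1 ≠ 0 := by positivity
    have n5 : (i:ℝ)+2 ≠ 0 := by positivity
    have n6 : (k:ℝ)+1 ≠ 0 := by positivity
    simp only [Bc,
      show k+1+i+1 - k = i+2 from by omega,
      show k+1+i+1+1 - (k+1) = i+2 from by omega,
      show k+1+i+1 - (k+1) = i+1 from by omega,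
      show k+1+i - (k+1) = i from by omega,
      hf1, hf2, hf3, hf4, hf5]
    push_cast
    simp only [div_pow]
    field_simp
    ring
  · rw [if_pos (le_refl (k+1)), if_neg (by omega)]
    have hf1 : (((k+1).factorial : ℕ) : ℝ) = ((k:ℝ)+1) * ((k.factorial : ℕ) : ℝ) := by
      rw [Nat.factorial_succ]; push_cast; ring
    have hf2 : (((k+1+1).factorial : ℕ) : ℝ) = ((k:ℝ)+2) * (((k:ℝ)+1) * ((k.factorial : ℕ) : ℝ)) := by
      rw [show k+1+1 = (k+1)+1 from rfl, Nat.factorial_succ, Nat.cast_mul, hf1]; push_cast; ring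
    have n1 : ((k.factorial : ℕ) : ℝ) ≠ 0 := Nat.cast_ne_zero.mpr (Nat.factorial_ne_zero _)
    have n6 : (k:ℝ)+1 ≠ 0 := by positivity
    have n7 : (k:ℝ)+2 ≠ 0 := by positivity
    simp only [Bc,
      show k+1 - k = 1 from by omega,
      show k+1+1 - (k+1) = 1 from by omega,
      show k+1 - (k+1) = 0 from by omega,
      hf1, hf2, Nat.factorial_one, Nat.factorial_zero, pow_zero, pow_one, Nat.cast_one,
      mul_zero, add_zero, mul_one, one_mul]
    push_cast
    field_simp
    ring
  · have hk1 : k = m + 1 := by omega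
    subst hk1
    rw [if_neg (by omega), if_neg (by omega)]
    have nA : (((m+1).factorial : ℕ) : ℝ) ≠ 0 := Nat.cast_ne_zero.mpr (Nat.factorial_ne_zero _)
    have nB : (((m+1+1).factorial : ℕ) : ℝ) ≠ 0 := Nat.cast_ne_zero.mpr (Nat.factorial_ne_zero _)
    simp only [Bc, Nat.sub_self, show m+1+1 - (m+1+1) = 0 from by omega, pow_zero,
      Nat.factorial_zero, Nat.cast_one, one_mul, mul_one, mul_zero, add_zero, sub_zero]
    field_simp
end

section
/- Let ⟨·,·⟩ be a skew symmetric bilinear product on polynomials, let {C_j}_{j≥0} be any family of monic polynomials (C_j of degree j), and set J^{mn} = ⟨C_m, C_n⟩. Assume the determinant D_n = det[J^{(2n-1-i)(2n-1-j)}]_{i,j=0,...,2n-1} is nonzero. Then the polynomial R_{2n}(x) = D_n^{-1} · det of the (2n+1)×(2n+1) matrix whose first column is (C_{2n}(x), C_{2n-1}(x), ..., C_0(x))ᵀ and whose remaining columns are (J^{i, 2n-1}, J^{i, 2n-2}, ..., J^{i, 0}) for row index i = 2n, 2n-1, ..., 0, is a monic polynomial of degree 2n satisfying ⟨C_j, R_{2n}⟩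 = 0 for all j ≤ 2n-1. -/
open scoped BigOperators

/-- Determinant formula for even-indexed skew orthogonal polynomials.
Given a skew symmetric bilinear product `B` on real polynomials, a family of
monic polynomials `C_j` with `deg C_j = j`, pairings `J^{mk} = ⟨C_m, C_k⟩`, and
nonzero `D_n = det[J^{(2n-1-i)(2n-1-j)}]`, the polynomial
`R_{2n}(x) = D_n⁻¹ det[...]` (first column `(C_{2n}(x),…,C_0(x))ᵀ`, remaining
columns `J^{i,2n-1},…,J^{i,0}`) is monic of degree `2n` and satisfies
`⟨C_j, R_{2n}⟩ = 0` for all `j ≤ 2n-1`. -/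
theorem skewOrthogonal_even_det_formula
    (B : Polynomial ℝ →ₗ[ℝ] Polynomial ℝ →ₗ[ℝ] ℝ)
    (hskew : ∀ f g : Polynomial ℝ, B f g = -B g f)
    (C : ℕ → Polynomial ℝ)
    (hmonic : ∀ j, (C j).Monic) (hdeg : ∀ j, (C j).natDegree = j)
    (J : ℕ → ℕ → ℝ) (hJ : ∀ m k, J m k = B (C m) (C k))
    (n : ℕ) (D : ℝ)
    (hD : D = Matrix.det (Matrix.of fun i j : Fin (2 * n) =>
      J (2 * n - 1 - (i : ℕ)) (2 * n - 1 - (j : ℕ))))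
    (hDne : D ≠ 0)
    (R : Polynomial ℝ)
    (hR : R = Polynomial.C D⁻¹ *
      Matrix.det (Matrix.of fun i j : Fin (2 * n + 1) =>
        if (j : ℕ) = 0 then C (2 * n - (i : ℕ))
        else Polynomial.C (J (2 * n - (i : ℕ)) (2 * n - (j : ℕ))))) :
    R.Monic ∧ R.natDegree = 2 * n ∧ ∀ j < 2 * n, B (C j) R = 0 := by
  set m := 2 * n with hm
  set d : Fin (m + 1) → ℝ := fun i =>
    Matrix.det (Matrix.of fun k j : Fin m =>
      J (m - (i.succAbove k : ℕ)) (m - ((j : ℕ) + 1))) with hdDef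
  -- expansion of R along first column
  have key : R = ∑ i : Fin (m + 1),
      Polynomial.C (D⁻¹ * ((-1) ^ (i : ℕ) * d i)) * C (m - (i : ℕ)) := by
    rw [hR, Matrix.det_succ_column_zero, Finset.mul_sum]
    refine Finset.sum_congr rfl fun i _ => ?_
    have hsub : ((Matrix.of fun i j : Fin (m + 1) =>
        if (j : ℕ) = 0 then C (m - (i : ℕ))
        else Polynomial.C (J (m - (i : ℕ)) (m - (j : ℕ)))).submatrix
          i.succAbove Fin.succ) =
        (Polynomial.C : ℝ →+* Polynomial ℝ).mapMatrix
          (Matrix.of fun k j : Fin m =>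
            J (m - (i.succAbove k : ℕ)) (m - ((j : ℕ) + 1))) := by
      ext k j
      simp [Matrix.submatrix_apply, Fin.val_succ, RingHom.mapMatrix_apply]
    rw [hsub, ← RingHom.map_det]
    have h0 : (Matrix.of fun i j : Fin (m + 1) =>
        if (j : ℕ) = 0 then C (m - (i : ℕ))
        else Polynomial.C (J (m - (i : ℕ)) (m - (j : ℕ)))) i 0 = C (m - (i : ℕ)) := by
      simp
    rw [h0]
    simp only [map_mul, map_pow, map_neg, map_one]
    ring
  have hd0 : d 0 = D := by
    have hmat : (Matrix.of fun k j : Fin m =>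
        J (m - (((0 : Fin (m + 1)).succAbove k : Fin (m + 1)) : ℕ)) (m - ((j : ℕ) + 1)))
        = Matrix.of fun i j : Fin m => J (m - 1 - (i : ℕ)) (m - 1 - (j : ℕ)) := by
      ext k l
      simp only [Matrix.of_apply, Fin.succAbove_zero, Fin.val_succ]
      have h1 : m - ((k : ℕ) + 1) = m - 1 - (k : ℕ) := by omega
      have h2 : m - ((l : ℕ) + 1) = m - 1 - (l : ℕ) := by omega
      rw [h1, h2]
    show Matrix.det _ = D
    rw [hmat, hD]
  -- split off the leading term
  have hsplit : R = C m + ∑ i : Fin m,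
      Polynomial.C (D⁻¹ * ((-1) ^ ((i : ℕ) + 1) * d i.succ)) * C (m - ((i : ℕ) + 1)) := by
    rw [key, Fin.sum_univ_succ]
    have h0 : Polynomial.C (D⁻¹ * ((-1) ^ (((0 : Fin (m + 1))) : ℕ) * d 0)) *
        C (m - (((0 : Fin (m + 1))) : ℕ)) = C m := by
      simp [hd0, inv_mul_cancel₀ hDne]
    rw [h0]
    simp only [Fin.val_succ]
  set rest := ∑ i : Fin m,
      Polynomial.C (D⁻¹ * ((-1) ^ ((i : ℕ) + 1) * d i.succ)) * C (m - ((i : ℕ) + 1)) with hrest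
  have hrestdeg : rest.degree < (C m).degree := by
    have hCm : (C m).degree = (m : ℕ) := by
      rw [Polynomial.degree_eq_natDegree (hmonic m).ne_zero, hdeg]
    rw [hCm]
    refine lt_of_le_of_lt (Polynomial.degree_sum_le _ _) ?_
    rw [Finset.sup_lt_iff (by exact_mod_cast WithBot.bot_lt_coe m)]
    intro i _
    refine lt_of_le_of_lt ?_ (?_ : ((C (m - ((i : ℕ) + 1))).degree < (m : ℕ)))
    · rw [← Polynomial.smul_eq_C_mul]
      exact Polynomial.degree_smul_le _ _
    · rw [Polynomial.degree_eq_natDegree (hmonic _).ne_zero, hdeg]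
      exact_mod_cast Nat.sub_lt_of_pos_le (Nat.succ_pos _) (by omega)
  have hmonR : R.Monic := by
    rw [hsplit]; exact (hmonic m).add_of_left hrestdeg
  have hdegR : R.natDegree = m := by
    have hdegeq : R.degree = (C m).degree := by
      rw [hsplit]; exact Polynomial.degree_add_eq_left_of_degree_lt hrestdeg
    have h2 := Polynomial.natDegree_eq_of_degree_eq hdegeq
    rw [h2, hdeg]
  refine ⟨hmonR, hdegR, ?_⟩
  intro j hj
  -- the matrix with first column replaced by J (m-i) j
  set N : Matrix (Fin (m + 1)) (Fin (m + 1)) ℝ := Matrix.of fun i k =>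
    if (k : ℕ) = 0 then J (m - (i : ℕ)) j else J (m - (i : ℕ)) (m - (k : ℕ)) with hN
  have hNdet0 : N.det = 0 := by
    have hk0 : (0 : Fin (m + 1)) ≠ (⟨m - j, by omega⟩ : Fin (m + 1)) := by
      intro h
      have := congrArg Fin.val h
      simp only [Fin.val_zero, Fin.val_mk] at this
      omega
    refine Matrix.det_zero_of_column_eq hk0 fun i => ?_
    simp only [hN, Matrix.of_apply, Fin.val_zero, Fin.val_mk, if_true]
    rw [if_neg (by omega)]
    congr 1
    omega
  have hNexp : N.det = ∑ i : Fin (m + 1), (-1) ^ (i : ℕ) * J (m - (i : ℕ)) j * d i := by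
    rw [Matrix.det_succ_column_zero]
    refine Finset.sum_congr rfl fun i _ => ?_
    have e1 : N i 0 = J (m - (i : ℕ)) j := by simp [hN]
    have e2 : Matrix.det (N.submatrix i.succAbove Fin.succ) = d i := by
      rw [hdDef]
      show Matrix.det _ = Matrix.det _
      congr 1
    simp only [e1, e2]
  have hBval : B (C j) R = D⁻¹ * -N.det := by
    rw [key, map_sum, hNexp, mul_neg, Finset.mul_sum, ← Finset.sum_neg_distrib]
    refine Finset.sum_congr rfl fun i _ => ?_
    rw [← Polynomial.smul_eq_C_mul, map_smul, smul_eq_mul]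
    have hB : B (C j) (C (m - (i : ℕ))) = -(J (m - (i : ℕ)) j) := by
      rw [hskew, hJ]
    rw [hB]
    ring
  rw [hBval, hNdet0]
  ring
end

section
/- If a skew symmetric product on monic polynomials satisfies the rank-one factorization ⟨C_m, C_n⟩ = a_m b_n for all m < n (and = -a_n b_m for m > n, 0 for m = n), then the skew orthogonality normalizations are r_n = a_{2n} b_{2n+1}, i.e. ⟨R_{2n}, R_{2n+1}⟩ = a_{2n} b_{2n+1} for the associated monic skew orthogonal polynomials, provided these exist. -/
open Polynomial

/-- Every polynomial of degree `< k` lies in the span of the first `k` members of a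
family of monic polynomials of each degree. -/
lemma poly_mem_span_of_degree_lt
    (Q : ℕ → Polynomial ℝ) (hm : ∀ j, (Q j).Monic) (hd : ∀ j, (Q j).natDegree = j) :
    ∀ (k : ℕ) (p : Polynomial ℝ), p.degree < (k : ℕ) →
      p ∈ Submodule.span ℝ (Q '' Set.Iio k) := by
  intro k
  induction k with
  | zero =>
    intro p hp
    have hp0 : p = 0 := by
      refine Polynomial.ext fun m => ?_
      have := (Polynomial.degree_lt_iff_coeff_zero p 0).1 (by exact_mod_cast hp) m (Nat.zero_le m)
      simpa using this
    simp [hp0]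
  | succ k ih =>
    intro p hp
    have hsub : Submodule.span ℝ (Q '' Set.Iio k) ≤ Submodule.span ℝ (Q '' Set.Iio (k+1)) :=
      Submodule.span_mono (Set.image_mono (fun x hx => lt_trans hx (Nat.lt_succ_self k)))
    have key : p - p.coeff k • Q k ∈ Submodule.span ℝ (Q '' Set.Iio k) := by
      refine ih _ ?_
      rw [Polynomial.degree_lt_iff_coeff_zero]
      intro m hkm
      rcases eq_or_lt_of_le hkm with h | h
      · subst h
        have h1 : (Q k).coeff k = 1 := by
          have := (hm k).coeff_natDegree
          rwa [hd k] at this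
        simp [Polynomial.coeff_sub, Polynomial.coeff_smul, h1]
      · have h1 : p.coeff m = 0 := by
          apply Polynomial.coeff_eq_zero_of_degree_lt
          exact lt_of_lt_of_le hp (by exact_mod_cast Nat.succ_le_of_lt h)
        have h2 : (Q k).coeff m = 0 := by
          apply Polynomial.coeff_eq_zero_of_natDegree_lt
          rw [hd k]; exact h
        simp [Polynomial.coeff_sub, Polynomial.coeff_smul, h1, h2]
    have hQk : Q k ∈ Submodule.span ℝ (Q '' Set.Iio (k+1)) :=
      Submodule.subset_span ⟨k, Nat.lt_succ_self k, rfl⟩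
    have := Submodule.add_mem _ (hsub key) (Submodule.smul_mem _ (p.coeff k) hQk)
    simpa using this

/-- If a skew symmetric bilinear product has the rank-one factorization
`⟨C_m, C_n⟩ = a_m b_n` for `m < n` on a family of monic polynomials `C_n`
(of degree `n`), then the normalizations of the associated monic skew
orthogonal polynomials are `r_n = ⟨R_{2n}, R_{2n+1}⟩ = a_{2n} b_{2n+1}`. -/
theorem skewOrthogonal_normalization
    (B : Polynomial ℝ →ₗ[ℝ] Polynomial ℝ →ₗ[ℝ] ℝ)
    (hskew : ∀ f g : Polynomial ℝ, B f g = -B g f)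
    (C : ℕ → Polynomial ℝ)
    (hmonic : ∀ j, (C j).Monic) (hdeg : ∀ j, (C j).natDegree = j)
    (a b : ℕ → ℝ)
    (hfac : ∀ m k, m < k → B (C m) (C k) = a m * b k)
    (R : ℕ → Polynomial ℝ)
    (hRmonic : ∀ k, (R k).Monic) (hRdeg : ∀ k, (R k).natDegree = k)
    (hee : ∀ m k, B (R (2 * m)) (R (2 * k)) = 0)
    (hoo : ∀ m k, B (R (2 * m + 1)) (R (2 * k + 1)) = 0)
    (heo : ∀ m k, m ≠ k → B (R (2 * m)) (R (2 * k + 1)) = 0)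
    (n : ℕ) :
    B (R (2 * n)) (R (2 * n + 1)) = a (2 * n) * b (2 * n + 1) := by
  have hBff : ∀ f, B f f = 0 := fun f => by have := hskew f f; linarith
  set N := 2 * n with hN
  -- degree facts
  have hdegC : ∀ j, (C j).degree = (j : ℕ) := fun j => by
    rw [Polynomial.degree_eq_natDegree (hmonic j).ne_zero, hdeg j]
  have hdegR : ∀ j, (R j).degree = (j : ℕ) := fun j => by
    rw [Polynomial.degree_eq_natDegree (hRmonic j).ne_zero, hRdeg j]
  set g : Polynomial ℝ := R N - C N with hg
  set H : Polynomial ℝ := R (N + 1) - C (N + 1) with hH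
  set c : ℝ := H.coeff N with hc
  set h2 : Polynomial ℝ := H - c • R N with hh2
  have hgdeg : g.degree < (N : ℕ) := by
    have := Polynomial.degree_sub_lt (by rw [hdegC, hdegR]) (hRmonic N).ne_zero
      (by rw [(hRmonic N).leadingCoeff, (hmonic N).leadingCoeff])
    rwa [hdegR] at this
  have hHdeg : H.degree < ((N + 1 : ℕ) : WithBot ℕ) := by
    have := Polynomial.degree_sub_lt (by rw [hdegC, hdegR]) (hRmonic (N+1)).ne_zero
      (by rw [(hRmonic (N+1)).leadingCoeff, (hmonic (N+1)).leadingCoeff])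
    rwa [hdegR] at this
  have hh2deg : h2.degree < (N : ℕ) := by
    rw [Polynomial.degree_lt_iff_coeff_zero]
    intro m hm'
    rcases eq_or_lt_of_le hm' with rfl | h
    · have h1 : (R N).coeff N = 1 := by
        have := (hRmonic N).coeff_natDegree
        rwa [hRdeg N] at this
      simp [hh2, Polynomial.coeff_sub, Polynomial.coeff_smul, h1, hc]
    · have h1 : H.coeff m = 0 := by
        apply Polynomial.coeff_eq_zero_of_degree_lt
        exact lt_of_lt_of_le hHdeg (by exact_mod_cast Nat.succ_le_of_lt h)
      have h2' : (R N).coeff m = 0 := by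
        apply Polynomial.coeff_eq_zero_of_natDegree_lt
        rw [hRdeg N]; exact h
      simp [hh2, Polynomial.coeff_sub, Polynomial.coeff_smul, h1, h2']
  -- memberships
  have hgR : g ∈ Submodule.span ℝ (R '' Set.Iio N) :=
    poly_mem_span_of_degree_lt R hRmonic hRdeg N g hgdeg
  have hgC : g ∈ Submodule.span ℝ (C '' Set.Iio N) :=
    poly_mem_span_of_degree_lt C hmonic hdeg N g hgdeg
  have hh2R : h2 ∈ Submodule.span ℝ (R '' Set.Iio N) :=
    poly_mem_span_of_degree_lt R hRmonic hRdeg N h2 hh2deg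
  have hh2C : h2 ∈ Submodule.span ℝ (C '' Set.Iio N) :=
    poly_mem_span_of_degree_lt C hmonic hdeg N h2 hh2deg
  -- orthogonality of low R's against R N and R (N+1)
  have horthN : ∀ j, j < N → B (R j) (R N) = 0 := by
    intro j hj
    rcases Nat.even_or_odd j with ⟨t, ht⟩ | ⟨t, ht⟩
    · have : j = 2 * t := by omega
      rw [this, hN]; exact hee t n
    · have : j = 2 * t + 1 := by omega
      have htn : n ≠ t := by omega
      rw [this, hN, hskew]
      rw [heo n t htn]; ring
  have horthN1 : ∀ j, j < N → B (R j) (R (N + 1)) = 0 := by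
    intro j hj
    rcases Nat.even_or_odd j with ⟨t, ht⟩ | ⟨t, ht⟩
    · have : j = 2 * t := by omega
      have htn : t ≠ n := by omega
      rw [this, hN]; exact heo t n htn
    · have : j = 2 * t + 1 := by omega
      rw [this, hN]; exact hoo t n
  have kerN : Submodule.span ℝ (R '' Set.Iio N) ≤ LinearMap.ker (B.flip (R N)) := by
    rw [Submodule.span_le]
    rintro _ ⟨j, hj, rfl⟩
    simp only [SetLike.mem_coe, LinearMap.mem_ker, LinearMap.flip_apply]
    exact horthN j hj
  have kerN1 : Submodule.span ℝ (R '' Set.Iio N) ≤ LinearMap.ker (B.flip (R (N+1))) := by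
    rw [Submodule.span_le]
    rintro _ ⟨j, hj, rfl⟩
    simp only [SetLike.mem_coe, LinearMap.mem_ker, LinearMap.flip_apply]
    exact horthN1 j hj
  have e1 : B g (R N) = 0 := by have := kerN hgR; simpa using this
  have e2 : B h2 (R N) = 0 := by have := kerN hh2R; simpa using this
  have e3 : B g (R (N+1)) = 0 := by have := kerN1 hgR; simpa using this
  have e4 : B h2 (R (N+1)) = 0 := by have := kerN1 hh2R; simpa using this
  -- swap lemma
  have swap1 : ∀ j, j < N → ∀ q ∈ Submodule.span ℝ (C '' Set.Iio N),
      B (C j) (C (N+1)) * B q (C N) = B (C j) (C N) * B q (C (N+1)) := by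
    intro j hj q hq
    have hker : Submodule.span ℝ (C '' Set.Iio N) ≤
        LinearMap.ker ((B (C j) (C (N+1))) • B.flip (C N) -
          (B (C j) (C N)) • B.flip (C (N+1))) := by
      rw [Submodule.span_le]
      rintro _ ⟨j', hj', rfl⟩
      simp only [SetLike.mem_coe, LinearMap.mem_ker, LinearMap.sub_apply, LinearMap.smul_apply,
        LinearMap.flip_apply, smul_eq_mul]
      rw [hfac j N hj, hfac j (N+1) (Nat.lt_succ_of_lt hj), hfac j' N hj',
        hfac j' (N+1) (Nat.lt_succ_of_lt hj')]
      ring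
    have := hker hq
    simp only [LinearMap.mem_ker, LinearMap.sub_apply, LinearMap.smul_apply,
      LinearMap.flip_apply, smul_eq_mul] at this
    linarith
  have swap : ∀ p ∈ Submodule.span ℝ (C '' Set.Iio N), ∀ q ∈ Submodule.span ℝ (C '' Set.Iio N),
      B p (C (N+1)) * B q (C N) = B p (C N) * B q (C (N+1)) := by
    intro p hp q hq
    have hker : Submodule.span ℝ (C '' Set.Iio N) ≤
        LinearMap.ker ((B q (C N)) • B.flip (C (N+1)) -
          (B q (C (N+1))) • B.flip (C N)) := by
      rw [Submodule.span_le]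
      rintro _ ⟨j, hj, rfl⟩
      simp only [SetLike.mem_coe, LinearMap.mem_ker, LinearMap.sub_apply, LinearMap.smul_apply,
        LinearMap.flip_apply, smul_eq_mul]
      have := swap1 j hj q hq
      linarith
    have := hker hp
    simp only [LinearMap.mem_ker, LinearMap.sub_apply, LinearMap.smul_apply,
      LinearMap.flip_apply, smul_eq_mul] at this
    linarith
  -- basic rewrites of C in terms of R, g, H
  have hCN : C N = R N - g := by rw [hg]; ring
  have hCN1 : C (N+1) = R (N+1) - H := by rw [hH]; ring
  have hHrw : H = h2 + c • R N := by rw [hh2]; ring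
  -- e5 : B g (C N) = 0
  have e5 : B g (C N) = 0 := by
    rw [hCN, map_sub, e1, hBff]; ring
  -- e6 : B h2 (C (N+1)) = 0
  have e6 : B h2 (C (N+1)) = 0 := by
    rw [hCN1, map_sub, e4, hHrw, map_add, hBff, map_smul]
    simp [e2]
  set x : ℝ := B h2 (C N) with hx
  set y : ℝ := B g (C (N+1)) with hy
  -- swap gives y * x = 0
  have e7 : y * x = 0 := by
    have := swap g hgC h2 hh2C
    rw [← hx, ← hy, e5, e6] at this
    linarith
  -- B g h2 = x and B g h2 = -y
  have e8 : B g h2 = x := by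
    have hs : B g h2 = -B h2 g := hskew g h2
    have h' : B h2 g = B h2 (R N) - B h2 (C N) := by rw [hg, map_sub]
    rw [hs, h', e2, ← hx]
    ring
  have e9 : B g h2 = -y := by
    rw [hh2, map_sub, map_smul, hH, map_sub, e3, e1, ← hy]
    simp
  have hxy : x = -y := by linarith [e8, e9]
  have hx0 : x = 0 := by
    have hxx : x * x = 0 := by
      calc x * x = -(y * x) := by rw [hxy]; ring
        _ = 0 := by rw [e7]; ring
    exact mul_self_eq_zero.1 hxx
  have hy0 : y = 0 := by linarith [hx0, hxy]
  -- final computation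
  have hRN : R N = C N + g := by rw [hg]; ring
  have hRN1 : R (N+1) = C (N+1) + H := by rw [hH]; ring
  have hBgh : B g H = 0 := by
    rw [hHrw, map_add, map_smul, e1, e8, hx0]
    simp
  have hBRNH : B (R N) H = 0 := by
    rw [hHrw, map_add, map_smul, hBff]
    have : B (R N) h2 = -B h2 (R N) := hskew _ _
    rw [this, e2]
    simp
  calc B (R N) (R (N+1)) = B (C N + g) (C (N+1) + H) := by rw [← hRN, ← hRN1]
    _ = B (C N) (C (N+1)) + B (C N) H + B g (C (N+1)) + B g H := by
        simp only [map_add, LinearMap.add_apply]; ring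
    _ = a N * b (N+1) + B (C N) H + y + 0 := by rw [hfac N (N+1) (by omega), ← hy, hBgh]
    _ = a N * b (N+1) := by
        have : B (C N) H = B (R N) H - B g H := by
          rw [hCN]; simp only [map_sub, LinearMap.sub_apply]
        rw [this, hBRNH, hBgh, hy0]; ring
end

section
/- For α > 0 fixed, the ratio t_N^{(α)}/t_{N-1}^{(α)} is asymptotic to √N as N → ∞, where t_N^{(α)} = ∑_{2n+m=N} ((2n+m)!/(2^n n! m!)) α^{m/2}. -/
open scoped BigOperators
open Filter

/-- `t_{n,m} = (2n+m)!/(2^n n! m!)`, as a real number. -/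
noncomputable def tInv (n m : ℕ) : ℝ :=
  ((2 * n + m).factorial : ℝ) / (2 ^ n * n.factorial * m.factorial)

/-- `t_N^{(α)} = ∑_{2n+m=N} t_{n,m} α^{m/2}`. -/
noncomputable def tWeighted (α : ℝ) (N : ℕ) : ℝ :=
  ∑ p ∈ (Finset.range (N + 1) ×ˢ Finset.range (N + 1)).filter
      (fun p => 2 * p.1 + p.2 = N),
    tInv p.1 p.2 * Real.sqrt α ^ p.2


lemma tInv_pos (n m : ℕ) : 0 < tInv n m := by
  unfold tInv
  have h1 : (0:ℝ) < ((2*n+m).factorial : ℝ) := by exact_mod_cast (2*n+m).factorial_pos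
  have h2 : (0:ℝ) < (2:ℝ)^n * (n.factorial : ℝ) * (m.factorial : ℝ) := by
    have := n.factorial_pos
    have := m.factorial_pos
    positivity
  exact div_pos h1 h2

lemma tInv_zero (m : ℕ) : tInv 0 m = 1 := by
  unfold tInv
  have h : (0:ℝ) < (m.factorial : ℝ) := by exact_mod_cast m.factorial_pos
  simp [Nat.factorial]
  exact Nat.factorial_ne_zero m

lemma tInv_id_a (n m : ℕ) :
    tInv (n+1) (m+1) = tInv (n+1) m + ((2*n+m+2 : ℕ) : ℝ) * tInv n (m+1) := by
  unfold tInv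
  have e1 : ((2*(n+1)+(m+1)).factorial : ℝ)
      = ((2*n+m+3 : ℕ) : ℝ) * (((2*n+m+2 : ℕ) : ℝ) * ((2*n+m+1).factorial : ℝ)) := by
    have h : 2*(n+1)+(m+1) = (2*n+m+1)+1+1 := by ring
    rw [h, Nat.factorial_succ, Nat.factorial_succ]
    push_cast; ring
  have e2 : ((2*(n+1)+m).factorial : ℝ) = ((2*n+m+2 : ℕ) : ℝ) * ((2*n+m+1).factorial : ℝ) := by
    have h : 2*(n+1)+m = (2*n+m+1)+1 := by ring
    rw [h, Nat.factorial_succ]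
    push_cast; ring
  have e3 : ((2*n+(m+1)).factorial : ℝ) = ((2*n+m+1).factorial : ℝ) := by
    norm_num [show 2*n+(m+1) = 2*n+m+1 from by ring]
  have e4 : (((n+1).factorial : ℕ) : ℝ) = ((n:ℝ)+1) * (n.factorial : ℝ) := by
    rw [Nat.factorial_succ]; push_cast; ring
  have e5 : (((m+1).factorial : ℕ) : ℝ) = ((m:ℝ)+1) * (m.factorial : ℝ) := by
    rw [Nat.factorial_succ]; push_cast; ring
  rw [e1, e2, e3, e4, e5]
  have hn : (n.factorial : ℝ) ≠ 0 := by positivity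
  have hm : (m.factorial : ℝ) ≠ 0 := by positivity
  have h2 : (2:ℝ)^n ≠ 0 := by positivity
  have hn1 : (n:ℝ)+1 ≠ 0 := by positivity
  have hm1 : (m:ℝ)+1 ≠ 0 := by positivity
  field_simp
  push_cast
  ring

lemma tInv_id_b (n : ℕ) :
    tInv (n+1) 0 = ((2*n+1 : ℕ) : ℝ) * tInv n 0 := by
  unfold tInv
  have e1 : ((2*(n+1)+0).factorial : ℝ)
      = ((2*n+2 : ℕ) : ℝ) * (((2*n+1 : ℕ) : ℝ) * ((2*n).factorial : ℝ)) := by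
    have h : 2*(n+1)+0 = (2*n)+1+1 := by ring
    rw [h, Nat.factorial_succ, Nat.factorial_succ]
    push_cast; ring
  have e2 : ((2*n+0).factorial : ℝ) = ((2*n).factorial : ℝ) := by norm_num
  have e4 : (((n+1).factorial : ℕ) : ℝ) = ((n:ℝ)+1) * (n.factorial : ℝ) := by
    rw [Nat.factorial_succ]; push_cast; ring
  rw [e1, e2, e4]
  have hn : (n.factorial : ℝ) ≠ 0 := by positivity
  have h2 : (2:ℝ)^n ≠ 0 := by positivity
  have hn1 : (n:ℝ)+1 ≠ 0 := by positivity
  field_simp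
  push_cast
  ring

lemma tWeighted_eq (α : ℝ) (N : ℕ) :
    tWeighted α N = ∑ n ∈ Finset.range (N/2 + 1),
      tInv n (N - 2*n) * Real.sqrt α ^ (N - 2*n) := by
  unfold tWeighted
  refine Finset.sum_nbij' (i := fun p => p.1) (j := fun n => (n, N - 2*n))
    ?_ ?_ ?_ ?_ ?_
  · intro p hp
    simp only [Finset.mem_filter, Finset.mem_product, Finset.mem_range] at hp
    simp only [Finset.mem_range]
    omega
  · intro n hn
    simp only [Finset.mem_range] at hn
    simp only [Finset.mem_filter, Finset.mem_product, Finset.mem_range]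
    omega
  · intro p hp
    simp only [Finset.mem_filter, Finset.mem_product, Finset.mem_range] at hp
    have : N - 2 * p.1 = p.2 := by omega
    simp [this]
  · intro n hn
    rfl
  · intro p hp
    simp only [Finset.mem_filter, Finset.mem_product, Finset.mem_range] at hp
    have : N - 2 * p.1 = p.2 := by omega
    simp [this]

lemma tWeighted_pos {α : ℝ} (hα : 0 < α) (N : ℕ) : 0 < tWeighted α N := by
  rw [tWeighted_eq]
  apply Finset.sum_pos
  · intro i _
    exact mul_pos (tInv_pos _ _) (pow_pos (Real.sqrt_pos.mpr hα) _)
  · exact ⟨0, Finset.mem_range.mpr (Nat.succ_pos _)⟩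

lemma tWeighted_rec (α : ℝ) (N : ℕ) :
    tWeighted α (N+2) = Real.sqrt α * tWeighted α (N+1) + ((N:ℝ)+1) * tWeighted α N := by
  set β := Real.sqrt α with hβ
  rw [tWeighted_eq, tWeighted_eq, tWeighted_eq]
  have hK : (N+2)/2 + 1 = N/2 + 2 := by omega
  rw [hK]
  have key : ∀ n ∈ Finset.range (N/2+2),
      tInv n (N+2-2*n) * β^(N+2-2*n)
        = (if 2*n ≤ N+1 then tInv n (N+1-2*n) * β^(N+1-2*n) else 0) * β
          + (if 1 ≤ n then ((N:ℝ)+1) * (tInv (n-1) (N+2-2*n) * β^(N+2-2*n)) else 0) := by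
    intro n hn
    simp only [Finset.mem_range] at hn
    by_cases h0 : n = 0
    · subst h0
      rw [if_pos (by omega), if_neg (by omega)]
      have e1 : N+2-2*0 = (N+1-2*0)+1 := by omega
      rw [e1, tInv_zero, tInv_zero, pow_succ]
      ring
    · obtain ⟨n', rfl⟩ : ∃ n', n = n'+1 := ⟨n-1, by omega⟩
      by_cases h1 : 2*(n'+1) ≤ N+1
      · obtain ⟨m', hm'⟩ : ∃ m', N+2-2*(n'+1) = m'+1 := ⟨N+1-2*(n'+1), by omega⟩
        rw [if_pos h1, if_pos (by omega), hm', tInv_id_a]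
        have e1 : N+1-2*(n'+1) = m' := by omega
        have e2 : n'+1-1 = n' := rfl
        have e3 : (2*n'+m'+2 : ℕ) = N+1 := by omega
        rw [e1, e2, e3, pow_succ]
        push_cast
        ring
      · have h2 : N+2-2*(n'+1) = 0 := by omega
        rw [if_neg h1, if_pos (by omega), h2, tInv_id_b]
        have e3 : (2*n'+1 : ℕ) = N+1 := by omega
        rw [e3]
        push_cast
        ring
  rw [Finset.sum_congr rfl key, Finset.sum_add_distrib]
  congr 1
  · rw [← Finset.sum_mul, ← Finset.sum_filter]
    have hf : (Finset.range (N/2+2)).filter (fun n => 2*n ≤ N+1)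
        = Finset.range ((N+1)/2+1) := by
      ext x
      simp only [Finset.mem_filter, Finset.mem_range]
      omega
    rw [hf, mul_comm]
  · rw [← Finset.sum_filter]
    have hf : (Finset.range (N/2+2)).filter (fun n => 1 ≤ n) = Finset.Ico 1 (N/2+2) := by
      ext x
      simp only [Finset.mem_filter, Finset.mem_range, Finset.mem_Ico]
      omega
    rw [hf, Finset.sum_Ico_eq_sum_range]
    have h2 : N/2+2-1 = N/2+1 := by omega
    rw [h2, Finset.mul_sum]
    refine Finset.sum_congr rfl ?_
    intro i _
    have e1 : 1+i-1 = i := by omega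
    have e2 : N+2-2*(1+i) = N-2*i := by omega
    rw [e1, e2]

noncomputable def ssx (α : ℝ) (N : ℕ) : ℝ :=
  tWeighted α (N+1) / (tWeighted α N * Real.sqrt ((N:ℝ)+1))

lemma ssx_pos {α : ℝ} (hα : 0 < α) (N : ℕ) : 0 < ssx α N := by
  apply div_pos (tWeighted_pos hα _)
  exact mul_pos (tWeighted_pos hα _) (Real.sqrt_pos.mpr (by positivity))

lemma ssx_rec {α : ℝ} (hα : 0 < α) (N : ℕ) :
    ssx α (N+1) = Real.sqrt α / Real.sqrt ((N:ℝ)+2)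
      + (Real.sqrt ((N:ℝ)+1) / Real.sqrt ((N:ℝ)+2)) / ssx α N := by
  have hu0 := (tWeighted_pos hα N).ne'
  have hu1 := (tWeighted_pos hα (N+1)).ne'
  have h1 : (0:ℝ) < (N:ℝ)+1 := by positivity
  have h2 : (0:ℝ) < (N:ℝ)+2 := by positivity
  have s1 : Real.sqrt ((N:ℝ)+1) ≠ 0 := ne_of_gt (Real.sqrt_pos.mpr h1)
  have s2 : Real.sqrt ((N:ℝ)+2) ≠ 0 := ne_of_gt (Real.sqrt_pos.mpr h2)
  have sq1 : Real.sqrt ((N:ℝ)+1) * Real.sqrt ((N:ℝ)+1) = (N:ℝ)+1 :=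
    Real.mul_self_sqrt h1.le
  unfold ssx
  have e : (((N+1:ℕ)):ℝ)+1 = (N:ℝ)+2 := by push_cast; ring
  rw [e]
  have key : tWeighted α (N+1+1) = Real.sqrt α * tWeighted α (N+1) + ((N:ℝ)+1) * tWeighted α N :=
    tWeighted_rec α N
  rw [key]
  field_simp
  linear_combination (-(tWeighted α N)) * sq1

lemma ssx_two_step {α : ℝ} (hα : 0 < α) (N : ℕ) :
    ssx α (N+2) = Real.sqrt α / Real.sqrt ((N:ℝ)+3)
      + (Real.sqrt ((N:ℝ)+2) / Real.sqrt ((N:ℝ)+3)) * ssx α N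
        / ((Real.sqrt α / Real.sqrt ((N:ℝ)+2)) * ssx α N
            + Real.sqrt ((N:ℝ)+1) / Real.sqrt ((N:ℝ)+2)) := by
  have hs := ssx_pos hα N
  have hb : (0:ℝ) ≤ Real.sqrt α / Real.sqrt ((N:ℝ)+2) := by positivity
  have hγ : (0:ℝ) < Real.sqrt ((N:ℝ)+1) / Real.sqrt ((N:ℝ)+2) := by
    apply div_pos <;> [skip; skip] <;> exact Real.sqrt_pos.mpr (by positivity)
  have h2 := ssx_rec hα (N+1)
  have e1 : (((N+1:ℕ)):ℝ)+2 = (N:ℝ)+3 := by push_cast; ring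
  have e2 : (((N+1:ℕ)):ℝ)+1 = (N:ℝ)+2 := by push_cast; ring
  rw [e1, e2] at h2
  rw [show N+1+1 = N+2 from rfl] at h2
  rw [h2, ssx_rec hα N]
  congr 1
  have hden : Real.sqrt α / Real.sqrt ((N:ℝ)+2) * ssx α N
      + Real.sqrt ((N:ℝ)+1) / Real.sqrt ((N:ℝ)+2) > 0 := by
    have := mul_nonneg hb hs.le
    linarith
  have hrw : Real.sqrt α / Real.sqrt ((N:ℝ)+2)
      + Real.sqrt ((N:ℝ)+1) / Real.sqrt ((N:ℝ)+2) / ssx α N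
      = (Real.sqrt α / Real.sqrt ((N:ℝ)+2) * ssx α N
          + Real.sqrt ((N:ℝ)+1) / Real.sqrt ((N:ℝ)+2)) / ssx α N := by
    field_simp
  rw [hrw, div_div_eq_mul_div]

lemma core_mono {b b' γ γ' s t : ℝ} (hb : 0 ≤ b) (hγ : 0 < γ) (hγ' : 0 ≤ γ')
    (hs : 0 < s) (hst : s ≤ t) :
    b' + γ' * s / (b * s + γ) ≤ b' + γ' * t / (b * t + γ) := by
  have h1 : 0 < b * s + γ := by nlinarith
  have h2 : 0 < b * t + γ := by nlinarith
  have h3 : γ' * s * (b * t + γ) ≤ γ' * t * (b * s + γ) := by nlinarith [mul_le_mul_of_nonneg_left hst (mul_nonneg hγ' hγ.le)]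
  exact add_le_add_right ((div_le_div_iff₀ h1 h2).mpr h3) b'

lemma core_drift {b b' γ γ' s θ d : ℝ} (hb : 0 ≤ b) (hγ : 0 < γ) (hγγ' : γ ≤ γ')
    (hs : 0 < s) (hsθ : s ≤ θ) (hd : 0 ≤ d) (h : b * θ^2 ≤ (b' - d) * γ) :
    s + d ≤ b' + γ' * s / (b * s + γ) := by
  have hbs : 0 < b * s + γ := by nlinarith
  have hbd : 0 ≤ b' - d := by nlinarith [sq_nonneg θ]
  have hsq : s^2 ≤ θ^2 := by nlinarith
  have hss : b * s^2 ≤ (b' - d) * (b * s + γ) := by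
    nlinarith [mul_nonneg hbd (mul_nonneg hb hs.le), mul_le_mul_of_nonneg_left hsq hb]
  have h1 : γ * s / (b * s + γ) ≤ γ' * s / (b * s + γ) := by
    exact (div_le_div_iff₀ hbs hbs).mpr (by nlinarith [mul_le_mul_of_nonneg_right (mul_le_mul_of_nonneg_right hγγ' hs.le) hbs.le])
  have expand : b' + γ * s / (b * s + γ) - (s + d)
      = ((b' - d) * (b * s + γ) - b * s^2) / (b * s + γ) := by
    field_simp
    ring
  have : 0 ≤ b' + γ * s / (b * s + γ) - (s + d) := by
    rw [expand]
    exact div_nonneg (by linarith) hbs.le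
  linarith


noncomputable def dd (α θ : ℝ) (N : ℕ) : ℝ :=
  Real.sqrt α * (1 - θ^2) / (2 * Real.sqrt ((N:ℝ)+3))

lemma dd_pos {α θ : ℝ} (hα : 0 < α) (hθ1 : θ < 1) (hθ0 : 0 < θ) (N : ℕ) :
    0 < dd α θ N := by
  unfold dd
  have h1 : 0 < 1 - θ^2 := by nlinarith
  have h2 : 0 < Real.sqrt α := Real.sqrt_pos.mpr hα
  have h3 : 0 < Real.sqrt ((N:ℝ)+3) := Real.sqrt_pos.mpr (by positivity)
  positivity

lemma dd_anti {α θ : ℝ} (hα : 0 < α) (hθ0 : 0 < θ) (hθ1 : θ < 1) {M K : ℕ} (h : M ≤ K) :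
    dd α θ K ≤ dd α θ M := by
  unfold dd
  have h1 : 0 ≤ 1 - θ^2 := by nlinarith
  have h2 : 0 ≤ Real.sqrt α := Real.sqrt_nonneg _
  have h3 : 0 < Real.sqrt ((M:ℝ)+3) := Real.sqrt_pos.mpr (by positivity)
  have h4 : Real.sqrt ((M:ℝ)+3) ≤ Real.sqrt ((K:ℝ)+3) := by
    apply Real.sqrt_le_sqrt
    have : (M:ℝ) ≤ K := Nat.cast_le.mpr h
    linarith
  rw [div_le_div_iff₀ (by positivity) (by positivity)]
  nlinarith [mul_le_mul_of_nonneg_left h4 (mul_nonneg h2 h1)]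

lemma lower_step {α : ℝ} (hα : 0 < α) {θ : ℝ} (hθ0 : 0 < θ) (hθ1 : θ < 1) :
    ∀ᶠ N : ℕ in Filter.atTop,
      (ssx α N ≤ θ → ssx α N + dd α θ N ≤ ssx α (N+2)) ∧
      (θ ≤ ssx α N → θ + dd α θ N ≤ ssx α (N+2)) := by
  have h1θ : 0 < 1 - θ^2 := by nlinarith
  have hβ : 0 < Real.sqrt α := Real.sqrt_pos.mpr hα
  filter_upwards [(tendsto_natCast_atTop_atTop (R := ℝ)).eventually_ge_atTop
      ((2*θ^2/(1-θ^2))^2)] with N hN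
  have p1 : (0:ℝ) < (N:ℝ)+1 := by positivity
  have p2 : (0:ℝ) < (N:ℝ)+2 := by positivity
  have p3 : (0:ℝ) < (N:ℝ)+3 := by positivity
  have s1 : 0 < Real.sqrt ((N:ℝ)+1) := Real.sqrt_pos.mpr p1
  have s2 : 0 < Real.sqrt ((N:ℝ)+2) := Real.sqrt_pos.mpr p2
  have s3 : 0 < Real.sqrt ((N:ℝ)+3) := Real.sqrt_pos.mpr p3
  -- key inequality
  have hs1 : 2*θ^2/(1-θ^2) ≤ Real.sqrt ((N:ℝ)+1) := by
    rw [Real.le_sqrt (by positivity) p1.le]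
    linarith
  have hone : (1:ℝ) ≤ Real.sqrt ((N:ℝ)+1) := Real.one_le_sqrt.mpr (by linarith)
  have hs2 : Real.sqrt ((N:ℝ)+3) ≤ Real.sqrt ((N:ℝ)+1) + 1 := by
    have hsq := Real.sq_sqrt p1.le
    have hle : (N:ℝ)+3 ≤ (Real.sqrt ((N:ℝ)+1) + 1)^2 := by nlinarith
    calc Real.sqrt ((N:ℝ)+3) ≤ Real.sqrt ((Real.sqrt ((N:ℝ)+1) + 1)^2) :=
          Real.sqrt_le_sqrt hle
      _ = Real.sqrt ((N:ℝ)+1) + 1 := Real.sqrt_sq (by positivity)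
  have hkey : 2*θ^2*Real.sqrt ((N:ℝ)+3) ≤ (1+θ^2)*Real.sqrt ((N:ℝ)+1) := by
    have e1 : 2*θ^2 ≤ (1-θ^2)*Real.sqrt ((N:ℝ)+1) := by
      calc 2*θ^2 = (1-θ^2)*(2*θ^2/(1-θ^2)) := by field_simp
        _ ≤ (1-θ^2)*Real.sqrt ((N:ℝ)+1) := mul_le_mul_of_nonneg_left hs1 h1θ.le
    nlinarith [mul_le_mul_of_nonneg_left hs2 (show (0:ℝ) ≤ 2*θ^2 by positivity)]
  have hγγ' : Real.sqrt ((N:ℝ)+1)/Real.sqrt ((N:ℝ)+2)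
      ≤ Real.sqrt ((N:ℝ)+2)/Real.sqrt ((N:ℝ)+3) := by
    rw [div_le_div_iff₀ s2 s3, ← Real.sqrt_mul p1.le, ← Real.sqrt_mul p2.le]
    apply Real.sqrt_le_sqrt
    nlinarith
  have hcond : (Real.sqrt α/Real.sqrt ((N:ℝ)+2)) * θ^2
      ≤ (Real.sqrt α/Real.sqrt ((N:ℝ)+3) - dd α θ N)
          * (Real.sqrt ((N:ℝ)+1)/Real.sqrt ((N:ℝ)+2)) := by
    have hbd' : Real.sqrt α/Real.sqrt ((N:ℝ)+3) - dd α θ N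
        = Real.sqrt α*(1+θ^2)/(2*Real.sqrt ((N:ℝ)+3)) := by
      unfold dd
      field_simp
      ring
    rw [hbd', div_mul_div_comm]
    have e0 : Real.sqrt α/Real.sqrt ((N:ℝ)+2) * θ^2
        = (Real.sqrt α*θ^2)/Real.sqrt ((N:ℝ)+2) := by ring
    rw [e0, div_le_div_iff₀ s2 (by positivity)]
    nlinarith [mul_le_mul_of_nonneg_left hkey (mul_nonneg hβ.le s2.le)]
  have hbnn : (0:ℝ) ≤ Real.sqrt α/Real.sqrt ((N:ℝ)+2) := by positivity
  have hγpos : (0:ℝ) < Real.sqrt ((N:ℝ)+1)/Real.sqrt ((N:ℝ)+2) := div_pos s1 s2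
  constructor
  · intro hle
    rw [ssx_two_step hα N]
    exact core_drift hbnn hγpos hγγ' (ssx_pos hα N) hle (dd_pos hα hθ1 hθ0 N).le hcond
  · intro hge
    rw [ssx_two_step hα N]
    calc θ + dd α θ N
        ≤ Real.sqrt α/Real.sqrt ((N:ℝ)+3)
          + (Real.sqrt ((N:ℝ)+2)/Real.sqrt ((N:ℝ)+3)) * θ
            / ((Real.sqrt α/Real.sqrt ((N:ℝ)+2)) * θ
                + Real.sqrt ((N:ℝ)+1)/Real.sqrt ((N:ℝ)+2)) :=
          core_drift hbnn hγpos hγγ' hθ0 le_rfl (dd_pos hα hθ1 hθ0 N).le hcond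
      _ ≤ _ := core_mono hbnn hγpos (by positivity) hθ0 hge

lemma sqrt_nat_tendsto : Filter.Tendsto (fun M : ℕ => Real.sqrt (M:ℝ))
    Filter.atTop Filter.atTop := by
  apply Filter.tendsto_atTop_atTop.2
  intro b
  obtain ⟨K, hK⟩ := exists_nat_ge (b^2)
  refine ⟨K, fun M hM => ?_⟩
  have h1 : (b^2 : ℝ) ≤ (M:ℝ) := le_trans hK (Nat.cast_le.mpr hM)
  calc b ≤ |b| := le_abs_self b
    _ = Real.sqrt (b^2) := (Real.sqrt_sq_eq_abs b).symm
    _ ≤ Real.sqrt (M:ℝ) := Real.sqrt_le_sqrt h1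

lemma eventually_lower {α : ℝ} (hα : 0 < α) {θ : ℝ} (hθ0 : 0 < θ) (hθ1 : θ < 1) :
    ∀ᶠ N : ℕ in Filter.atTop, θ ≤ ssx α N := by
  obtain ⟨N₀, hstep⟩ := Filter.eventually_atTop.mp (lower_step hα hθ0 hθ1)
  have h1θ : 0 < 1 - θ^2 := by nlinarith
  have hβ : 0 < Real.sqrt α := Real.sqrt_pos.mpr hα
  have inv : ∀ N, N₀ ≤ N → ∀ k : ℕ,
      min θ (ssx α N + (k:ℝ) * dd α θ (N+2*k)) ≤ ssx α (N+2*k) := by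
    intro N hN k
    induction k with
    | zero => simpa using min_le_right θ (ssx α N)
    | succ k ih =>
      push_cast
      have hst := hstep (N+2*k) (by omega)
      have e : N+2*(k+1) = (N+2*k)+2 := by ring
      rcases le_total (ssx α (N+2*k)) θ with hc | hc
      · have h1 : ssx α (N+2*k) + dd α θ (N+2*k) ≤ ssx α (N+2*(k+1)) := by
          rw [e]; exact hst.1 hc
        have hA : ((k:ℝ)+1) * dd α θ (N+2*(k+1))
            ≤ (k:ℝ) * dd α θ (N+2*k) + dd α θ (N+2*k) := by
          have h2 := dd_anti hα hθ0 hθ1 (show N+2*k ≤ N+2*(k+1) by omega)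
          have hk : (0:ℝ) ≤ (k:ℝ) := Nat.cast_nonneg k
          nlinarith
        rcases le_total θ (ssx α N + (k:ℝ) * dd α θ (N+2*k)) with hm | hm
        · rw [min_eq_left hm] at ih
          have hd := dd_pos hα hθ1 hθ0 (N+2*k)
          calc min θ (ssx α N + ((k:ℝ)+1) * dd α θ (N+2*(k+1))) ≤ θ := min_le_left _ _
            _ ≤ ssx α (N+2*(k+1)) := by linarith
        · rw [min_eq_right hm] at ih
          have h3 : min θ (ssx α N + ((k:ℝ)+1) * dd α θ (N+2*(k+1)))
              ≤ ssx α N + ((k:ℝ)+1) * dd α θ (N+2*(k+1)) := min_le_right _ _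
          linarith
      · have h1 : θ + dd α θ (N+2*k) ≤ ssx α (N+2*(k+1)) := by
          rw [e]; exact hst.2 hc
        have hd := dd_pos hα hθ1 hθ0 (N+2*k)
        calc min θ (ssx α N + ((k:ℝ)+1) * dd α θ (N+2*(k+1))) ≤ θ := min_le_left _ _
          _ ≤ ssx α (N+2*(k+1)) := by linarith
  -- divergence of k * dd
  have hgrow : ∀ᶠ M : ℕ in Filter.atTop,
      θ ≤ (((M:ℝ) - (N₀:ℝ) - 1)/2) * dd α θ M := by
    have c'pos : 0 < Real.sqrt α * (1-θ^2) := mul_pos hβ h1θ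
    have key : Filter.Tendsto (fun M : ℕ => (((M:ℝ) - (N₀:ℝ) - 1)/2) * dd α θ M)
        Filter.atTop Filter.atTop := by
      apply Filter.tendsto_atTop_mono' Filter.atTop ?_
        (sqrt_nat_tendsto.const_mul_atTop
          (show 0 < Real.sqrt α * (1-θ^2)/16 by positivity))
      filter_upwards [Filter.eventually_ge_atTop (2*(N₀+2)), Filter.eventually_ge_atTop 1]
        with M h1 h2
      have hM1 : (1:ℝ) ≤ (M:ℝ) := by exact_mod_cast h2
      have hMN : 2*((N₀:ℝ)+2) ≤ (M:ℝ) := by exact_mod_cast h1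
      have hsM : 0 < Real.sqrt (M:ℝ) := Real.sqrt_pos.mpr (by linarith)
      have hsq : Real.sqrt (M:ℝ) * Real.sqrt (M:ℝ) = (M:ℝ) :=
        Real.mul_self_sqrt (by linarith)
      have h4eq : Real.sqrt (4:ℝ) = 2 := by
        rw [show (4:ℝ) = 2^2 by norm_num, Real.sqrt_sq (by norm_num : (0:ℝ) ≤ 2)]
      have hup : Real.sqrt ((M:ℝ)+3) ≤ 2*Real.sqrt (M:ℝ) := by
        calc Real.sqrt ((M:ℝ)+3) ≤ Real.sqrt (4*(M:ℝ)) := Real.sqrt_le_sqrt (by linarith)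
          _ = Real.sqrt 4 * Real.sqrt (M:ℝ) := Real.sqrt_mul (by norm_num) _
          _ = 2*Real.sqrt (M:ℝ) := by rw [h4eq]
      have hs3 : 0 < Real.sqrt ((M:ℝ)+3) := Real.sqrt_pos.mpr (by linarith)
      unfold dd
      have hf1 : (M:ℝ)/4 ≤ ((M:ℝ) - (N₀:ℝ) - 1)/2 := by linarith
      have hf2 : Real.sqrt α*(1-θ^2)/(4*Real.sqrt (M:ℝ))
          ≤ Real.sqrt α*(1-θ^2)/(2*Real.sqrt ((M:ℝ)+3)) := by
        rw [div_le_div_iff₀ (by positivity) (by positivity)]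
        nlinarith [mul_le_mul_of_nonneg_left hup c'pos.le]
      have heq : (M:ℝ)/4 * (Real.sqrt α*(1-θ^2)/(4*Real.sqrt (M:ℝ)))
          = Real.sqrt α*(1-θ^2)/16 * Real.sqrt (M:ℝ) := by
        have hp : Real.sqrt (M:ℝ)^2 = (M:ℝ) := Real.sq_sqrt (by linarith)
        field_simp
        linear_combination (-16) * hp
      calc Real.sqrt α*(1-θ^2)/16 * Real.sqrt (M:ℝ)
          = (M:ℝ)/4 * (Real.sqrt α*(1-θ^2)/(4*Real.sqrt (M:ℝ))) := heq.symm
        _ ≤ (((M:ℝ) - (N₀:ℝ) - 1)/2) * (Real.sqrt α*(1-θ^2)/(2*Real.sqrt ((M:ℝ)+3))) := by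
            apply mul_le_mul hf1 hf2 (div_nonneg c'pos.le (by positivity)) (by linarith)
    exact key.eventually_ge_atTop θ
  rw [Filter.eventually_atTop]
  obtain ⟨M₁, hM₁⟩ := Filter.eventually_atTop.mp hgrow
  refine ⟨max (N₀+2) M₁, fun M hM => ?_⟩
  have hMN₀ : N₀ + 2 ≤ M := le_trans (le_max_left _ _) hM
  have hMM₁ : M₁ ≤ M := le_trans (le_max_right _ _) hM
  have hdM := (dd_pos hα hθ1 hθ0 M).le
  have hgM := hM₁ M hMM₁
  rcases Nat.even_or_odd (M - N₀) with ⟨k, hk⟩ | ⟨k, hk⟩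
  · have hM' : M = N₀ + 2*k := by omega
    have h := inv N₀ le_rfl k
    rw [← hM'] at h
    have hpos := ssx_pos hα N₀
    have hcast : (M:ℝ) = (N₀:ℝ) + 2*(k:ℝ) := by
      rw [hM']; push_cast; ring
    have hk2 : θ ≤ (k:ℝ) * dd α θ M := by nlinarith
    have hmin : θ ≤ ssx α N₀ + (k:ℝ) * dd α θ M := by linarith
    calc θ = min θ (ssx α N₀ + (k:ℝ) * dd α θ M) := (min_eq_left hmin).symm
      _ ≤ ssx α M := h
  · have hM' : M = (N₀+1) + 2*k := by omega
    have h := inv (N₀+1) (by omega) k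
    rw [← hM'] at h
    have hpos := ssx_pos hα (N₀+1)
    have hcast : (M:ℝ) = (N₀:ℝ) + 1 + 2*(k:ℝ) := by
      rw [hM']; push_cast; ring
    have hk2 : θ ≤ (k:ℝ) * dd α θ M := by nlinarith
    have hmin : θ ≤ ssx α (N₀+1) + (k:ℝ) * dd α θ M := by linarith
    calc θ = min θ (ssx α (N₀+1) + (k:ℝ) * dd α θ M) := (min_eq_left hmin).symm
      _ ≤ ssx α M := h

lemma eventually_upper {α : ℝ} (hα : 0 < α) {ε : ℝ} (hε : 0 < ε) :
    ∀ᶠ N : ℕ in Filter.atTop, ssx α N ≤ 1 + ε := by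
  set θ : ℝ := (1+ε/2)⁻¹ with hθdef
  have hθ0 : 0 < θ := by positivity
  have hθ1 : θ < 1 := by
    rw [hθdef]
    rw [inv_lt_one_iff₀]
    right; linarith
  have hlow := eventually_lower hα hθ0 hθ1
  have hbsmall : ∀ᶠ N : ℕ in Filter.atTop,
      Real.sqrt α / Real.sqrt ((N:ℝ)+2) ≤ ε/2 := by
    filter_upwards [(tendsto_natCast_atTop_atTop (R := ℝ)).eventually_ge_atTop
        ((2*Real.sqrt α/ε)^2)] with N hN
    have s2 : 0 < Real.sqrt ((N:ℝ)+2) := Real.sqrt_pos.mpr (by positivity)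
    rw [div_le_iff₀ s2]
    have h1 : 2*Real.sqrt α/ε ≤ Real.sqrt ((N:ℝ)+2) := by
      rw [Real.le_sqrt (by positivity) (by positivity)]
      linarith
    calc Real.sqrt α = (ε/2)*(2*Real.sqrt α/ε) := by field_simp
      _ ≤ (ε/2)*Real.sqrt ((N:ℝ)+2) := by
          exact mul_le_mul_of_nonneg_left h1 (by positivity)
      _ = ε/2*Real.sqrt ((N:ℝ)+2) := rfl
  have main : ∀ᶠ N : ℕ in Filter.atTop, ssx α (N+1) ≤ 1 + ε := by
    filter_upwards [hlow, hbsmall] with N h1 h2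
    rw [ssx_rec hα N]
    have s1 : 0 < Real.sqrt ((N:ℝ)+1) := Real.sqrt_pos.mpr (by positivity)
    have s2 : 0 < Real.sqrt ((N:ℝ)+2) := Real.sqrt_pos.mpr (by positivity)
    have hγ1 : Real.sqrt ((N:ℝ)+1)/Real.sqrt ((N:ℝ)+2) ≤ 1 := by
      rw [div_le_one s2]
      exact Real.sqrt_le_sqrt (by linarith)
    have hsp := ssx_pos hα N
    have hdiv : (Real.sqrt ((N:ℝ)+1)/Real.sqrt ((N:ℝ)+2)) / ssx α N ≤ 1/θ := by
      apply div_le_div₀ (by positivity) hγ1 hθ0 h1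
    have hinv : (1:ℝ)/θ = 1 + ε/2 := by
      rw [hθdef, one_div, inv_inv]
    linarith
  obtain ⟨M₀, hM₀⟩ := Filter.eventually_atTop.mp main
  rw [Filter.eventually_atTop]
  refine ⟨M₀+1, fun M hM => ?_⟩
  have h := hM₀ (M-1) (by omega)
  rwa [Nat.sub_add_cancel (by omega)] at h

lemma ssx_tendsto {α : ℝ} (hα : 0 < α) :
    Filter.Tendsto (ssx α) Filter.atTop (nhds 1) := by
  rw [tendsto_order]
  constructor
  · intro b hb
    rcases le_or_gt b 0 with hb0 | hb0
    · filter_upwards with N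
      exact lt_of_le_of_lt hb0 (ssx_pos hα N)
    · have h1 : 0 < (b+1)/2 := by linarith
      have h2 : (b+1)/2 < 1 := by linarith
      filter_upwards [eventually_lower hα h1 h2] with N h
      linarith
  · intro b hb
    filter_upwards [eventually_upper hα (show 0 < (b-1)/2 by linarith)] with N h
    linarith

/-- For fixed `α > 0`, `t_N^{(α)}/t_{N-1}^{(α)} ∼ √N` as `N → ∞`, i.e.
`t_N^{(α)}/(√N · t_{N-1}^{(α)}) → 1`. -/
theorem tWeighted_ratio_asymptotic (α : ℝ) (hα : 0 < α) :
    Filter.Tendsto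
      (fun N : ℕ => tWeighted α N / (Real.sqrt N * tWeighted α (N - 1)))
      Filter.atTop (nhds 1) := by
  have h := (ssx_tendsto hα).comp (tendsto_sub_atTop_nat 1)
  refine Filter.Tendsto.congr' ?_ h
  filter_upwards [Filter.eventually_ge_atTop 1] with N hN
  simp only [Function.comp]
  unfold ssx
  have e1 : N-1+1 = N := by omega
  have e2 : ((N-1:ℕ):ℝ)+1 = (N:ℝ) := by
    rw [Nat.cast_sub hN]
    push_cast
    ring
  rw [e1, e2, mul_comm]
end
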